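/- Every continuous field automorphism of ℂ_p fixing ℚ_p restricts to a ℚ_p-automorphism of ℚ̄_p, and this gives an isomorphism between the group of continuous automorphisms of ℂ_p over ℚ_p and the Galois group G_{ℚ_p} = Gal(ℚ̄_p/ℚ_p). -/

import Mathlib

/-- An abstract characterization of `ℂ_p`, the completion of an algebraic closure of `ℚ_p`:
a complete, algebraically closed, nonarchimedean normed field, whose (multiplicative) norm
extends the `p`-adic norm, and in which the algebraic elements over `ℚ_p` are dense. -/
class PadicComplexField (p : ℕ) [Fact p.Prime] (C : Type*) [NormedField C]
    [Algebra ℚ_[p] C] : Prop where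
  complete : CompleteSpace C
  ultrametric : IsUltrametricDist C
  algClosed : IsAlgClosed C
  norm_extends : ∀ x : ℚ_[p], ‖algebraMap ℚ_[p] C x‖ = ‖x‖
  dense_algebraic : Dense {x : C | IsAlgebraic ℚ_[p] x}

/-!
By uniqueness of the spectral norm, every multiplicative norm on an algebraic extension of the
complete ultrametric field `ℚ_p` that extends `|·|_p` is the spectral norm; so each
`σ ∈ Gal(ℚ̄_p/ℚ_p)` preserves the norm pulled back along `ι`, `ι ∘ σ` is an isometry, and it
extends by density and completeness to a continuous automorphism of `ℂ_p`. Conversely, `ℚ̄_p`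
is normal over `ℚ_p`, so every automorphism of `ℂ_p` restricts to `ℚ̄_p`, and a continuous one is
determined by its restriction since `ι(ℚ̄_p)`, the set of algebraic elements, is dense.
-/

theorem norm_algHom_apply_eq {K A C : Type*} [NontriviallyNormedField K] [CompleteSpace K]
    [IsUltrametricDist K] [Field A] [Algebra K A] [Algebra.IsAlgebraic K A] [NormedField C]
    [Algebra K C] (hC : ∀ k : K, ‖algebraMap K C k‖ = ‖k‖) (f g : A →ₐ[K] C) (x : A) :
    ‖f x‖ = ‖g x‖ := by
  have h (φ : A →ₐ[K] C) : ‖φ x‖ = spectralNorm K A x :=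
    spectralNorm_unique_field_norm_ext
      (f := (NormedField.toAbsoluteValue C).comp (RingHom.injective φ.toRingHom))
      (fun k => by rw [← hC k, ← φ.commutes k]; rfl) x
  rw [h f, h g]

theorem IsAlgClosed.mem_range_algebraMap_of_isAlgebraic {F A C : Type*} [Field F] [Field A]
    [IsAlgClosed A] [CommRing C] [IsDomain C] [Algebra F A] [Algebra A C] [Algebra F C]
    [IsScalarTower F A C] {x : C} (hx : IsAlgebraic F x) : x ∈ (algebraMap A C).range :=
  minpoly.mem_range_of_degree_eq_one A x <| IsAlgClosed.degree_eq_one_of_irreducible A <|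
    minpoly.irreducible (hx.tower_top A).isIntegral

theorem DenseRange.exists_continuous_ringHom_extension {A C D : Type*} [Ring A] [NormedRing C]
    [NormedRing D] [CompleteSpace D] {ι : A →+* C} (hι : DenseRange ι) (f : A →+* D)
    (hf : ∀ x, ‖f x‖ = ‖ι x‖) : ∃ τ : C →+* D, Continuous τ ∧ ∀ x, τ (ι x) = f x := by
  let : PseudoMetricSpace A := PseudoMetricSpace.induced ι inferInstance
  have hι_isom : Isometry ι := Isometry.of_dist_eq fun _ _ => rfl
  have hf_isom : Isometry f := Isometry.of_dist_eq fun a b => by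
    change dist (f a) (f b) = dist (ι a) (ι b)
    rw [dist_eq_norm, dist_eq_norm, ← map_sub, ← map_sub, hf]
  have hι_ui := hι_isom.isUniformInducing
  exact ⟨IsDenseInducing.extendRingHom hι_ui hι hf_isom.uniformContinuous,
    (uniformContinuous_uniformly_extend hι_ui hι hf_isom.uniformContinuous).continuous,
    (hι_ui.isDenseInducing hι).extend_eq hf_isom.continuous⟩

def continuousAlgEquivSubmonoid (F C : Type*) [CommSemiring F] [Semiring C] [TopologicalSpace C]
    [Algebra F C] : Submonoid (C ≃ₐ[F] C) where
  carrier := {τ | Continuous τ}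
  mul_mem' hσ hτ := hσ.comp hτ
  one_mem' := continuous_id

section Tower

variable {F A C : Type*} [Field F] [Field A] [NormedField C] [Algebra F A] [Algebra A C]
  [Algebra F C] [IsScalarTower F A C]

theorem exists_continuous_algHom_extension [CompleteSpace C] (hA : DenseRange (algebraMap A C))
    (σ : A →ₐ[F] A) (hσ : ∀ x, ‖algebraMap A C (σ x)‖ = ‖algebraMap A C x‖) :
    ∃ τ : C →ₐ[F] C, Continuous τ ∧ ∀ x, τ (algebraMap A C x) = algebraMap A C (σ x) := by
  obtain ⟨τ, hτ, hτσ⟩ := hA.exists_continuous_ringHom_extension ((algebraMap A C).comp σ) hσ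
  refine ⟨{ τ with commutes' := fun c => ?_ }, hτ, hτσ⟩
  simp [IsScalarTower.algebraMap_apply F A C, hτσ]

theorem exists_continuous_algEquiv_restrictNormal_eq [CompleteSpace C] [Normal F A]
    (hA : DenseRange (algebraMap A C)) (σ : A ≃ₐ[F] A)
    (hσ : ∀ x, ‖algebraMap A C (σ x)‖ = ‖algebraMap A C x‖) :
    ∃ τ : C ≃ₐ[F] C, Continuous τ ∧ τ.restrictNormal A = σ := by
  obtain ⟨τ, hτ, hτσ⟩ := exists_continuous_algHom_extension hA σ.toAlgHom hσ
  obtain ⟨τ', hτ', hτ'σ⟩ := exists_continuous_algHom_extension hA σ.symm.toAlgHom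
    fun x => by simpa using (hσ (σ.symm x)).symm
  have h₁ : τ.comp τ' = AlgHom.id F C := AlgHom.coe_fn_injective <|
    hA.equalizer (hτ.comp hτ') continuous_id (funext fun x => by simp [hτ'σ, hτσ])
  have h₂ : τ'.comp τ = AlgHom.id F C := AlgHom.coe_fn_injective <|
    hA.equalizer (hτ'.comp hτ) continuous_id (funext fun x => by simp [hτ'σ, hτσ])
  refine ⟨AlgEquiv.ofAlgHom τ τ' h₁ h₂, hτ, AlgEquiv.ext fun x => ?_⟩
  apply (algebraMap A C).injective
  rw [AlgEquiv.restrictNormal_commutes]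
  exact hτσ x

theorem eq_of_restrictNormal_eq [Normal F A] (hA : DenseRange (algebraMap A C))
    {τ₁ τ₂ : C ≃ₐ[F] C} (h₁ : Continuous τ₁) (h₂ : Continuous τ₂)
    (h : τ₁.restrictNormal A = τ₂.restrictNormal A) : τ₁ = τ₂ :=
  AlgEquiv.coe_fun_injective <| hA.equalizer h₁ h₂ <| funext fun x => by
    simp only [Function.comp_apply, ← AlgEquiv.restrictNormal_commutes, h]

theorem bijective_restrictNormalHom_comp_subtype [CompleteSpace C] [Normal F A]
    (hA : DenseRange (algebraMap A C))
    (hnorm : ∀ (σ : A ≃ₐ[F] A) x, ‖algebraMap A C (σ x)‖ = ‖algebraMap A C x‖) :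
    Function.Bijective
      ((AlgEquiv.restrictNormalHom A).comp (continuousAlgEquivSubmonoid F C).subtype) := by
  refine ⟨fun τ₁ τ₂ h => Subtype.ext (eq_of_restrictNormal_eq hA τ₁.2 τ₂.2 h), fun σ => ?_⟩
  obtain ⟨τ, hτ, hτσ⟩ := exists_continuous_algEquiv_restrictNormal_eq hA σ (hnorm σ)
  exact ⟨⟨τ, hτ⟩, hτσ⟩

theorem exists_monoidHom_algEquiv_onto_continuous [CompleteSpace C] [Normal F A]
    (hA : DenseRange (algebraMap A C))
    (hnorm : ∀ (σ : A ≃ₐ[F] A) x, ‖algebraMap A C (σ x)‖ = ‖algebraMap A C x‖) :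
    ∃ Φ : (A ≃ₐ[F] A) →* (C ≃ₐ[F] C),
      (∀ σ, Continuous (Φ σ) ∧ ∀ x, Φ σ (algebraMap A C x) = algebraMap A C (σ x)) ∧
      Function.Injective Φ ∧ ∀ τ : C ≃ₐ[F] C, Continuous τ → ∃ σ, Φ σ = τ := by
  let R := MulEquiv.ofBijective _ (bijective_restrictNormalHom_comp_subtype hA hnorm)
  refine ⟨(continuousAlgEquivSubmonoid F C).subtype.comp R.symm.toMonoidHom,
    fun σ => ⟨(R.symm σ).2, fun x => ?_⟩, Subtype.val_injective.comp R.symm.injective,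
    fun τ hτ => ⟨R ⟨τ, hτ⟩, by simp⟩⟩
  conv_rhs => rw [← R.apply_symm_apply σ]
  exact (AlgEquiv.restrictNormal_commutes _ A x).symm

end Tower

/-- every continuous field automorphism of `ℂ_p` fixing `ℚ_p` restricts to a
`ℚ_p`-automorphism of `ℚ̄_p` (embedded in `ℂ_p` via `ι`), and this gives an isomorphism
between the group of continuous `ℚ_p`-automorphisms of `ℂ_p` and the Galois group
`G_{ℚ_p} = Gal(ℚ̄_p/ℚ_p)`: there is an injective group homomorphism from `G_{ℚ_p}` to the
automorphisms of `ℂ_p` whose image consists exactly of the continuous ones, compatible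
with the embedding `ι`. -/
theorem continuous_autos_of_Cp_eq_galois (p : ℕ) [Fact p.Prime] (C : Type*) [NormedField C]
    [Algebra ℚ_[p] C] [PadicComplexField p C]
    (ι : AlgebraicClosure ℚ_[p] →ₐ[ℚ_[p]] C) :
    ∃ F : (AlgebraicClosure ℚ_[p] ≃ₐ[ℚ_[p]] AlgebraicClosure ℚ_[p]) →* (C ≃ₐ[ℚ_[p]] C),
      (∀ σ, Continuous (F σ) ∧ ∀ x : AlgebraicClosure ℚ_[p], F σ (ι x) = ι (σ x)) ∧
      Function.Injective F ∧
      ∀ τ : C ≃ₐ[ℚ_[p]] C, Continuous τ → ∃ σ, F σ = τ := by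
  obtain ⟨hcomplete, -, -, hnorm, hdense⟩ := ‹PadicComplexField p C›
  let : Algebra (AlgebraicClosure ℚ_[p]) C := ι.toAlgebra
  have : IsScalarTower ℚ_[p] (AlgebraicClosure ℚ_[p]) C :=
    IsScalarTower.of_algebraMap_eq' ι.comp_algebraMap.symm
  have hι : DenseRange ι :=
    hdense.mono fun _ hx => IsAlgClosed.mem_range_algebraMap_of_isAlgebraic hx
  exact exists_monoidHom_algEquiv_onto_continuous hι fun σ x =>
    norm_algHom_apply_eq hnorm (ι.comp σ.toAlgHom) ι x
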